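/- (Proposition 3). Let g be a kernel of ℓ dimensions whose partial distance sequence D_g(0) ≤ ⋯ ≤ D_g(ℓ−1) is non-decreasing. Then the sequence (D_g(i))_{i=0}^{ℓ−1} is ℓ-dimensions LP-valid; that is: (a) D_g(i) ≤ d(ℓ, ℓ−i) for every i, and (b) there exist nonnegative real numbers B̄_i^{(k)}, for k ∈ {0,…,ℓ−1} and D_g(k) ≤ i ≤ ℓ, satisfying: (1) Σ_{i=D_g(ℓ−r)}^{ℓ} B̄_i^{(ℓ−r)} = 2^r − 1 for every r ∈ {1,…,ℓ}; (2) B̄_i^{(ℓ−r)} ≥ B̄_i^{(ℓ−r+1)} for every r ∈ {1,…,ℓ−1} and every i with D_g(ℓ−r+1) ≤ i ≤ ℓ; (3) Σ_{j=D_g(ℓ−r)}^{ℓ} B̄_j^{(ℓ−r)}·P_i(j) ≥ −C(ℓ,i) for every i ∈ {0,…,ℓ} and every r ∈ {1,…,ℓ}. -/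

import Mathlib

/-- The `i`-th partial distance of a kernel `g` of `ℓ` dimensions:
`D_g(i) = min { d_H(g(w•0•u), g(w•1•v)) : w ∈ {0,1}^i, u, v ∈ {0,1}^{ℓ−1−i} }`,
phrased via pairs of inputs that agree on coordinates `< i` and differ as `0`/`1`
at coordinate `i`. -/
noncomputable def partialDist {ℓ : ℕ} (g : (Fin ℓ → ZMod 2) → (Fin ℓ → ZMod 2)) (i : ℕ) : ℕ :=
  sInf { d | ∃ x y : Fin ℓ → ZMod 2,
    (∀ j : Fin ℓ, (j : ℕ) < i → x j = y j) ∧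
    (∀ j : Fin ℓ, (j : ℕ) = i → x j = 0 ∧ y j = 1) ∧
    d = hammingDist (g x) (g y) }

/-- `d(n,k)`: the largest `d` such that there is a binary code of length `n` and size `2^k`
all of whose pairs of distinct codewords are at Hamming distance at least `d`. -/
noncomputable def maxMinDist (n k : ℕ) : ℕ :=
  sSup { d | ∃ C : Finset (Fin n → ZMod 2), C.card = 2 ^ k ∧
    ∀ c0 ∈ C, ∀ c1 ∈ C, c0 ≠ c1 → d ≤ hammingDist c0 c1 }

/-- The binary Krawtchouk polynomial of degree `i` for length `ℓ`, evaluated at `x`. -/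
def kraw (ℓ i x : ℕ) : ℤ :=
  ∑ m ∈ Finset.range (i + 1),
    (-1) ^ m * (Nat.choose x m : ℤ) * (Nat.choose (ℓ - x) (i - m) : ℤ)

/-!
Take `B̄^{(k)}_j` to be the number of ordered pairs of inputs that agree on their first `k`
coordinates and whose images under `g` are at Hamming distance `j`, divided by `2^ℓ`: the average
distance distribution of the `2^k` codes `g({w} × {0,1}^{ℓ-k})`. Two distinct inputs agreeing
below `k` first differ at some `i ≥ k`, so by monotonicity their images are at distance at least
`D_g(i) ≥ D_g(k)`. This gives the bound by `d(ℓ, ℓ-k)` and, since the diagonal accounts for all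
pairs at distance `0`, the normalisation `∑_{j ≥ D_g(k)} B̄^{(k)}_j = 2^{ℓ-k} - 1`. The pairs for
`k + 1` are among those for `k`. The Krawtchouk inequalities are Delsarte's: as
`K_i(d(a,b)) = ∑_{|z|=i} (-1)^{z·a} (-1)^{z·b}`, the sum of `K_i(d)` over pairs in a common class
is a sum of squares, and removing the diagonal costs `2^ℓ C(ℓ,i)`.
-/

open Finset

lemma kraw_zero (ℓ i : ℕ) : kraw ℓ i 0 = ℓ.choose i := by
  simp [kraw, sum_range_succ']

section Krawtchouk
variable {α : Type*} [DecidableEq α]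

lemma card_powersetCard_filter_card_inter {U T : Finset α} (hTU : T ⊆ U) {i m : ℕ}
    (hm : m ≤ i) :
    #{s ∈ powersetCard i U | #(s ∩ T) = m} = (#T).choose m * (#U - #T).choose (i - m) := by
  rw [← card_sdiff_of_subset hTU, ← card_powersetCard, ← card_powersetCard, ← card_product]
  refine card_nbij' (fun s => (s ∩ T, s \ T)) (fun q => q.1 ∪ q.2) ?_ ?_ ?_ ?_
  · intro s hs
    simp only [coe_filter, mem_powersetCard, Set.mem_ofPred_eq] at hs
    have hcard := card_inter_add_card_sdiff s T
    simp only [coe_product, Set.mem_prod, mem_coe, mem_powersetCard]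
    refine ⟨⟨inter_subset_right, hs.2⟩, sdiff_subset_sdiff hs.1.1 subset_rfl, by omega⟩
  · rintro ⟨A, B⟩ hAB
    simp only [coe_product, Set.mem_prod, mem_coe, mem_powersetCard] at hAB
    obtain ⟨⟨hAT, hA⟩, hBU, hB⟩ := hAB
    have hBT : Disjoint B T := disjoint_of_subset_left hBU sdiff_disjoint
    simp only [coe_filter, mem_powersetCard, Set.mem_ofPred_eq]
    refine ⟨⟨union_subset (hAT.trans hTU) (hBU.trans sdiff_subset), ?_⟩, ?_⟩
    · rw [card_union_of_disjoint (disjoint_of_subset_left hAT hBT.symm), hA, hB]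
      omega
    · rw [union_inter_distrib_right, inter_eq_left.2 hAT, disjoint_iff_inter_eq_empty.1 hBT,
        union_empty, hA]
  · intro s _
    exact (union_comm _ _).trans (sdiff_union_inter s T)
  · rintro ⟨A, B⟩ hAB
    simp only [coe_product, Set.mem_prod, mem_coe, mem_powersetCard] at hAB
    obtain ⟨⟨hAT, -⟩, hBU, -⟩ := hAB
    have hBT : Disjoint B T := disjoint_of_subset_left hBU sdiff_disjoint
    simp only [Prod.mk.injEq]
    constructor
    · rw [union_inter_distrib_right, inter_eq_left.2 hAT, disjoint_iff_inter_eq_empty.1 hBT,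
        union_empty]
    · rw [union_sdiff_distrib, sdiff_eq_empty_iff_subset.2 hAT, hBT.sdiff_eq_left, empty_union]

lemma sum_powersetCard_neg_one_pow_card_inter {U T : Finset α} (hTU : T ⊆ U) (i : ℕ) :
    ∑ s ∈ powersetCard i U, (-1 : ℤ) ^ #(s ∩ T) = kraw #U i #T := by
  have hmaps : ∀ s ∈ powersetCard i U, #(s ∩ T) ∈ range (i + 1) := fun s hs => by
    rw [mem_range, Nat.lt_succ_iff, ← (mem_powersetCard.1 hs).2]
    exact card_le_card inter_subset_left
  rw [kraw, ← sum_fiberwise_of_maps_to' hmaps]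
  refine sum_congr rfl fun m hm => ?_
  rw [sum_const, card_powersetCard_filter_card_inter hTU (Nat.lt_succ_iff.1 (mem_range.1 hm)),
    nsmul_eq_mul]
  push_cast
  ring

end Krawtchouk

def signChar : AddChar (ZMod 2) ℤ := AddChar.zmodChar 2 (ζ := -1) (by norm_num)

lemma signChar_natCast (n : ℕ) : signChar n = (-1) ^ n := AddChar.zmodChar_apply' _ n

section Characters
variable {α : Type*} [Fintype α] [DecidableEq α]

lemma sum_hammingNorm_eq_sum_powersetCard {M : Type*} [AddCommMonoid M] (i : ℕ)
    (F : Finset α → M) :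
    ∑ z : α → ZMod 2 with hammingNorm z = i, F ({j | z j ≠ 0} : Finset α)
      = ∑ s ∈ powersetCard i univ, F s := by
  refine sum_nbij' (fun z => ({j | z j ≠ 0} : Finset α)) (fun s j => if j ∈ s then 1 else 0)
    ?_ ?_ ?_ ?_ fun _ _ => rfl
  · intro z hz
    simpa [hammingNorm] using hz
  · intro s hs
    simp [hammingNorm, ← (mem_powersetCard.1 hs).2]
  · intro z _
    funext j
    have hbit : ∀ a : ZMod 2, (if a ≠ 0 then 1 else 0) = a := by decide
    simpa using hbit (z j)
  · intro s _
    ext j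
    simp

lemma dotProduct_eq_card_inter (z u : α → ZMod 2) :
    z ⬝ᵥ u = (#(({j | z j ≠ 0} : Finset α) ∩ ({j | u j ≠ 0} : Finset α)) : ZMod 2) := by
  have hmul : ∀ a b : ZMod 2, a * b = if a ≠ 0 ∧ b ≠ 0 then 1 else 0 := by decide
  simp only [dotProduct, hmul, sum_boole, filter_and]

lemma sum_signChar_dotProduct (u : α → ZMod 2) (i : ℕ) :
    ∑ z : α → ZMod 2 with hammingNorm z = i, signChar (z ⬝ᵥ u)
      = kraw (Fintype.card α) i (hammingNorm u) := by
  simp only [dotProduct_eq_card_inter, signChar_natCast]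
  rw [sum_hammingNorm_eq_sum_powersetCard i
      fun s => (-1 : ℤ) ^ #(s ∩ ({j | u j ≠ 0} : Finset α)),
    sum_powersetCard_neg_one_pow_card_inter (subset_univ _), card_univ]
  rfl

lemma kraw_hammingDist_eq_sum (a b : α → ZMod 2) (i : ℕ) :
    kraw (Fintype.card α) i (hammingDist a b)
      = ∑ z : α → ZMod 2 with hammingNorm z = i, signChar (z ⬝ᵥ a) * signChar (z ⬝ᵥ b) := by
  rw [hammingDist_eq_hammingNorm, ZModModule.neg_eq_self, ← sum_signChar_dotProduct]
  simp only [dotProduct_add, AddChar.map_add_eq_mul]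

end Characters

lemma sum_filter_key_eq_sum_sq {ι κ R : Type*} [Fintype ι] [Fintype κ] [DecidableEq κ]
    [CommSemiring R] (key : ι → κ) (f : ι → R) :
    ∑ p : ι × ι with key p.1 = key p.2, f p.1 * f p.2
      = ∑ w, (∑ x with key x = w, f x) ^ 2 := by
  rw [← sum_fiberwise _ (fun p => key p.1)]
  refine sum_congr rfl fun w _ => ?_
  rw [sq, sum_mul_sum, ← sum_product']
  refine sum_congr ?_ fun _ _ => rfl
  ext p
  simp only [mem_filter, mem_univ, true_and, mem_product]
  constructor
  · rintro ⟨h, rfl⟩; exact ⟨rfl, h.symm⟩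
  · rintro ⟨h1, h2⟩; exact ⟨h1.trans h2.symm, h1⟩

theorem sum_kraw_hammingDist_nonneg {α ι κ : Type*} [Fintype α] [DecidableEq α] [Fintype ι]
    [Fintype κ] [DecidableEq κ] (key : ι → κ) (c : ι → α → ZMod 2) (i : ℕ) :
    0 ≤ ∑ p : ι × ι with key p.1 = key p.2,
      kraw (Fintype.card α) i (hammingDist (c p.1) (c p.2)) := by
  simp only [kraw_hammingDist_eq_sum]
  rw [sum_comm]
  refine sum_nonneg fun z _ => ?_
  rw [sum_filter_key_eq_sum_sq key fun x => signChar (z ⬝ᵥ c x)]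
  exact sum_nonneg fun w _ => sq_nonneg _

lemma card_filter_forall_lt_eq {β : Type*} [Fintype β] [DecidableEq β] {ℓ : ℕ}
    (x : Fin ℓ → β) (k : ℕ) :
    #{y : Fin ℓ → β | ∀ j : Fin ℓ, (j : ℕ) < k → y j = x j} = Fintype.card β ^ (ℓ - k) := by
  have hpi : ({y : Fin ℓ → β | ∀ j : Fin ℓ, (j : ℕ) < k → y j = x j} : Finset _)
      = Fintype.piFinset fun j : Fin ℓ => if (j : ℕ) < k then {x j} else univ := by
    ext y
    simp only [mem_filter, mem_univ, true_and, Fintype.mem_piFinset]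
    refine forall_congr' fun j => ?_
    split_ifs <;> simp [*]
  have hcompl : #{j : Fin ℓ | ¬ (j : ℕ) < k} = ℓ - k := by
    rw [filter_not, card_sdiff_of_subset (filter_subset _ _), Fin.card_filter_val_lt, card_univ,
      Fintype.card_fin]
    omega
  rw [hpi, Fintype.card_piFinset]
  simp only [apply_ite card, card_singleton, card_univ]
  rw [prod_ite, prod_const_one, prod_const, one_mul, hcompl]

def agreePairs (ℓ k : ℕ) : Finset ((Fin ℓ → ZMod 2) × (Fin ℓ → ZMod 2)) :=
  {p | ∀ j : Fin ℓ, (j : ℕ) < k → p.1 j = p.2 j}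

lemma card_agreePairs (ℓ k : ℕ) : #(agreePairs ℓ k) = 2 ^ ℓ * 2 ^ (ℓ - k) := by
  calc #(agreePairs ℓ k)
      = ∑ x : Fin ℓ → ZMod 2, #{y : Fin ℓ → ZMod 2 | ∀ j : Fin ℓ, (j : ℕ) < k → y j = x j} := by
        rw [agreePairs, card_filter, Fintype.sum_prod_type]
        simp only [card_filter, eq_comm]
    _ = 2 ^ ℓ * 2 ^ (ℓ - k) := by simp [card_filter_forall_lt_eq]

lemma agreePairs_anti {ℓ k k' : ℕ} (hk : k ≤ k') : agreePairs ℓ k' ⊆ agreePairs ℓ k := by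
  intro p hp
  simp only [agreePairs, mem_filter, mem_univ, true_and] at hp ⊢
  exact fun j hj => hp j (hj.trans_le hk)

lemma le_maxMinDist {n k d : ℕ} (hk : 0 < k) (C : Finset (Fin n → ZMod 2)) (hC : #C = 2 ^ k)
    (hd : ∀ c0 ∈ C, ∀ c1 ∈ C, c0 ≠ c1 → d ≤ hammingDist c0 c1) : d ≤ maxMinDist n k := by
  refine le_csSup ⟨n, ?_⟩ ⟨C, hC, hd⟩
  rintro d' ⟨C', hC', hd'⟩
  obtain ⟨a, ha, b, hb, hab⟩ := one_lt_card.1 (hC' ▸ Nat.one_lt_two_pow hk.ne')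
  exact (hd' a ha b hb hab).trans (hammingDist_le_card_fintype.trans (Fintype.card_fin n).le)

section Kernel
variable {ℓ : ℕ} (g : (Fin ℓ → ZMod 2) → (Fin ℓ → ZMod 2))

noncomputable def distCount (k j : ℕ) : ℕ :=
  #{p ∈ agreePairs ℓ k | hammingDist (g p.1) (g p.2) = j}

lemma distCount_anti {k k' : ℕ} (hk : k ≤ k') (j : ℕ) : distCount g k' j ≤ distCount g k j :=
  card_le_card (filter_subset_filter _ (agreePairs_anti hk))

lemma partialDist_le_hammingDist {x y : Fin ℓ → ZMod 2} (i : Fin ℓ)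
    (hagree : ∀ j < i, x j = y j) (hne : x i ≠ y i) :
    partialDist g i ≤ hammingDist (g x) (g y) := by
  have hcases : ∀ a b : ZMod 2, a ≠ b → a = 0 ∧ b = 1 ∨ a = 1 ∧ b = 0 := by decide
  rcases hcases _ _ hne with h | h
  · exact Nat.sInf_le ⟨x, y, fun j hj => hagree j hj, fun j hj => Fin.ext hj ▸ h, rfl⟩
  · rw [hammingDist_comm]
    exact Nat.sInf_le
      ⟨y, x, fun j hj => (hagree j hj).symm, fun j hj => Fin.ext hj ▸ ⟨h.2, h.1⟩, rfl⟩

lemma monotoneOn_partialDist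
    (hmono : ∀ i, i + 1 < ℓ → partialDist g i ≤ partialDist g (i + 1)) :
    MonotoneOn (partialDist g) (Set.Iio ℓ) :=
  monotoneOn_of_le_succ Set.ordConnected_Iio fun a _ _ ha => by
    rw [Order.succ_eq_add_one] at ha ⊢
    exact hmono a ha

lemma partialDist_le_hammingDist_of_agree
    (hmono : ∀ i, i + 1 < ℓ → partialDist g i ≤ partialDist g (i + 1))
    {k : ℕ} {x y : Fin ℓ → ZMod 2} (hxy : x ≠ y)
    (hagree : ∀ j : Fin ℓ, (j : ℕ) < k → x j = y j) :
    partialDist g k ≤ hammingDist (g x) (g y) := by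
  have hdiff : ({j | x j ≠ y j} : Finset (Fin ℓ)).Nonempty := by
    obtain ⟨j, hj⟩ := Function.ne_iff.1 hxy
    exact ⟨j, by simpa using hj⟩
  set i := ({j | x j ≠ y j} : Finset (Fin ℓ)).min' hdiff
  have hi : x i ≠ y i := (mem_filter.1 (min'_mem _ hdiff)).2
  have hbelow : ∀ j < i, x j = y j := fun j hj =>
    by_contra fun h => (min'_le _ j (by simpa using h)).not_gt hj
  have hki : k ≤ i := by
    by_contra h
    exact hi (hagree i (by omega))
  calc partialDist g k ≤ partialDist g i :=
        monotoneOn_partialDist g hmono (hki.trans_lt i.2) i.2 hki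
    _ ≤ _ := partialDist_le_hammingDist g i hbelow hi

lemma one_le_partialDist (hg : Function.Injective g) {k : ℕ} (hk : k < ℓ) :
    1 ≤ partialDist g k := by
  refine le_csInf ⟨_, 0, Pi.single ⟨k, hk⟩ 1, ?_, ?_, rfl⟩ ?_
  · intro j hj
    simp [Fin.ext_iff, hj.ne]
  · intro j hj
    simp [show j = ⟨k, hk⟩ from Fin.ext hj]
  · rintro d ⟨x, y, -, hxy, rfl⟩
    refine Nat.one_le_iff_ne_zero.2 fun h => ?_
    have hk' := hxy ⟨k, hk⟩ rfl
    rw [hg (hammingDist_eq_zero.1 h), hk'.2] at hk'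
    exact one_ne_zero hk'.1

lemma partialDist_le_maxMinDist (hg : Function.Injective g)
    (hmono : ∀ i, i + 1 < ℓ → partialDist g i ≤ partialDist g (i + 1))
    {i : ℕ} (hi : i < ℓ) : partialDist g i ≤ maxMinDist ℓ (ℓ - i) := by
  refine le_maxMinDist (by omega) (image g {x | ∀ j : Fin ℓ, (j : ℕ) < i → x j = 0}) ?_ ?_
  · rw [card_image_of_injective _ hg]
    simpa using card_filter_forall_lt_eq (0 : Fin ℓ → ZMod 2) i
  · simp only [mem_image, mem_filter, mem_univ, true_and]
    rintro _ ⟨x, hx, rfl⟩ _ ⟨y, hy, rfl⟩ hne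
    exact partialDist_le_hammingDist_of_agree g hmono (ne_of_apply_ne g hne)
      fun j hj => (hx j hj).trans (hy j hj).symm

lemma distCount_zero (hg : Function.Injective g) (k : ℕ) : distCount g k 0 = 2 ^ ℓ := by
  have hdiag : {p ∈ agreePairs ℓ k | hammingDist (g p.1) (g p.2) = 0} = univ.diag := by
    ext ⟨x, y⟩
    simp only [agreePairs, mem_filter, mem_univ, true_and, hammingDist_eq_zero, hg.eq_iff,
      mem_diag]
    exact and_iff_right_of_imp fun h j _ => h ▸ rfl
  rw [distCount, hdiag, diag_card, card_univ, Fintype.card_fun, ZMod.card, Fintype.card_fin]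

lemma distCount_eq_zero (hmono : ∀ i, i + 1 < ℓ → partialDist g i ≤ partialDist g (i + 1))
    {k j : ℕ} (hj : j ≠ 0) (hjk : j < partialDist g k) : distCount g k j = 0 := by
  rw [distCount, card_eq_zero, filter_eq_empty_iff]
  rintro ⟨x, y⟩ hp rfl
  simp only [agreePairs, mem_filter, mem_univ, true_and] at hp
  have hxy : x ≠ y := by
    rintro rfl
    exact hj (hammingDist_self _)
  exact (partialDist_le_hammingDist_of_agree g hmono hxy hp).not_gt hjk

lemma sum_distCount_mul {R : Type*} [CommSemiring R] (k : ℕ) (h : ℕ → R) :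
    ∑ j ∈ range (ℓ + 1), (distCount g k j : R) * h j
      = ∑ p ∈ agreePairs ℓ k, h (hammingDist (g p.1) (g p.2)) := by
  have hmaps : ∀ p ∈ agreePairs ℓ k, hammingDist (g p.1) (g p.2) ∈ range (ℓ + 1) := fun p _ =>
    mem_range.2 (Nat.lt_succ_of_le (hammingDist_le_card_fintype.trans (Fintype.card_fin ℓ).le))
  rw [← sum_fiberwise_of_maps_to' hmaps]
  simp [distCount, sum_const, nsmul_eq_mul]

lemma sum_Icc_distCount_mul {R : Type*} [CommRing R] (hg : Function.Injective g)
    (hmono : ∀ i, i + 1 < ℓ → partialDist g i ≤ partialDist g (i + 1))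
    {k : ℕ} (hk : k < ℓ) (h : ℕ → R) :
    ∑ j ∈ Icc (partialDist g k) ℓ, (distCount g k j : R) * h j
      = ∑ p ∈ agreePairs ℓ k, h (hammingDist (g p.1) (g p.2)) - 2 ^ ℓ * h 0 := by
  rw [← sum_distCount_mul, range_eq_Ico, sum_eq_sum_Ico_succ_bot (Nat.succ_pos ℓ),
    distCount_zero g hg, Nat.cast_pow, Nat.cast_ofNat, add_sub_cancel_left]
  have hD := one_le_partialDist g hg hk
  refine sum_subset (fun j hj => ?_) fun j hj hj' => ?_
  · simp only [mem_Icc, mem_Ico] at hj ⊢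
    omega
  · simp only [mem_Icc, mem_Ico, not_and, not_le] at hj hj'
    rw [distCount_eq_zero g hmono (by omega) (by omega), Nat.cast_zero, zero_mul]

lemma sum_Icc_distCount (hg : Function.Injective g)
    (hmono : ∀ i, i + 1 < ℓ → partialDist g i ≤ partialDist g (i + 1)) {k : ℕ} (hk : k < ℓ) :
    ∑ j ∈ Icc (partialDist g k) ℓ, (distCount g k j : ℝ) = 2 ^ ℓ * (2 ^ (ℓ - k) - 1) := by
  have h := sum_Icc_distCount_mul g hg hmono hk fun _ => (1 : ℝ)
  simp only [mul_one, sum_const, card_agreePairs, nsmul_eq_mul] at h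
  rw [h]
  push_cast
  ring

lemma sum_agreePairs_kraw_nonneg (k i : ℕ) :
    0 ≤ ∑ p ∈ agreePairs ℓ k, kraw ℓ i (hammingDist (g p.1) (g p.2)) := by
  let key (x : Fin ℓ → ZMod 2) (j : {j : Fin ℓ // (j : ℕ) < k}) : ZMod 2 := x j
  have hkey : agreePairs ℓ k = univ.filter fun p => key p.1 = key p.2 := by
    ext p
    simp [agreePairs, key, funext_iff]
  rw [hkey]
  simpa using sum_kraw_hammingDist_nonneg key g i

lemma neg_le_sum_Icc_distCount_mul_kraw (hg : Function.Injective g)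
    (hmono : ∀ i, i + 1 < ℓ → partialDist g i ≤ partialDist g (i + 1)) {k : ℕ} (hk : k < ℓ)
    (i : ℕ) :
    -(2 ^ ℓ * ℓ.choose i : ℤ) ≤
      ∑ j ∈ Icc (partialDist g k) ℓ, (distCount g k j : ℤ) * kraw ℓ i j := by
  rw [sum_Icc_distCount_mul g hg hmono hk, kraw_zero]
  linarith [sum_agreePairs_kraw_nonneg g k i]

end Kernel

theorem partialDist_LPvalid {ℓ : ℕ}
    (g : (Fin ℓ → ZMod 2) → (Fin ℓ → ZMod 2)) (hg : Function.Bijective g)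
    (hmono : ∀ i, i + 1 < ℓ → partialDist g i ≤ partialDist g (i + 1)) :
    (∀ i < ℓ, partialDist g i ≤ maxMinDist ℓ (ℓ - i)) ∧
    ∃ B : ℕ → ℕ → ℝ,
      (∀ k i, 0 ≤ B k i) ∧
      (∀ r, 1 ≤ r → r ≤ ℓ →
        ∑ i ∈ Finset.Icc (partialDist g (ℓ - r)) ℓ, B (ℓ - r) i = 2 ^ r - 1) ∧
      (∀ r, 1 ≤ r → r ≤ ℓ - 1 → ∀ i, partialDist g (ℓ - r + 1) ≤ i → i ≤ ℓ →
        B (ℓ - r + 1) i ≤ B (ℓ - r) i) ∧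
      (∀ i ≤ ℓ, ∀ r, 1 ≤ r → r ≤ ℓ →
        -(Nat.choose ℓ i : ℝ) ≤
          ∑ jj ∈ Finset.Icc (partialDist g (ℓ - r)) ℓ, B (ℓ - r) jj * (kraw ℓ i jj : ℝ)) := by
  refine ⟨fun i hi => partialDist_le_maxMinDist g hg.1 hmono hi,
    fun k j => (distCount g k j : ℝ) / 2 ^ ℓ, fun k j => by positivity, ?_, ?_, ?_⟩
  · intro r hr₁ hrℓ
    rw [← sum_div, sum_Icc_distCount g hg.1 hmono (by omega), Nat.sub_sub_self hrℓ]
    field_simp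
  · intro r _ _ j _ _
    dsimp only
    gcongr
    exact distCount_anti g (Nat.le_succ _) j
  · intro i _ r hr₁ hrℓ
    have h := (Int.cast_le (R := ℝ)).2
      (neg_le_sum_Icc_distCount_mul_kraw g hg.1 hmono (k := ℓ - r) (by omega) i)
    push_cast at h
    simp_rw [div_mul_eq_mul_div, ← sum_div]
    rw [le_div_iff₀ (by positivity)]
    linarith
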